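/- For all positive integers k_1, k_2, every p ∈ ℕ₀, and every n ∈ ℕ: H_n(−p, k_1, k_2) = H_n(−p)·H_n(k_1,k_2) − (1/(p+1))·Σ_{j=p+2−k_1}^{p} binom(p+1,j)·B_j·H_n(k_1+j−p−1, k_2) + (1/(p+1))·Σ_{j_1=0}^{p+1−k_1} Σ_{j_2=p+3−k_1−k_2−j_1}^{p+1−k_1−j_1} (binom(p+1,j_1)·binom(p+2−k_1−j_1, j_2)/(p+2−k_1−j_1))·B_{j_1}B_{j_2}·H_n(k_1+k_2+j_1+j_2−p−2) + (1/(p+1))·Σ_{j_1=0}^{p+1−k_1} Σ_{j_2=0}^{p+2−k_1−k_2−j_1} Σ_{j_3=0}^{p+2−k_1−k_2−j_1−j_2} (binom(p+1,j_1)·binom(p+2−k_1−j_1,j_2)·binom(p+3−k_1−k_2−j_1−j_2,j_3)/((p+2−k_1−j_1)(p+3−k_1−k_2−j_1−j_2)))·B_{j_1}B_{j_2}B_{j_3}·n^{p+3−k_1−k_2−j_1−j_2−j_3} − (1/(p+1))·Σ_{j=0}^{p+1−k_1} Σ_{l=0}^{p+1−k_1−j} (binom(p+1,j)·binom(p+2−k_1−j,l)/(p+2−k_1−j))·n^{p+2−k_1−j−l}·B_j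 B_l·H_n(k_2), where any sum whose upper limit is smaller than its lower limit is empty and sums start at lower limits ≥ 0 (negative lower limits are truncated at 0). -/

import Mathlib

open Finset

/-- Extended multiple harmonic sum `H_n(k_1,…,k_r) = ∑_{n ≥ n_1 > ⋯ > n_r ≥ 1} 1/(n_1^{k_1} ⋯ n_r^{k_r})`,
with `H_n(∅) = 1`; the exponents may be arbitrary integers.  In particular `Hs n [-(p:ℤ)] = ∑_{m=1}^n m^p`
and `Hs n [1]` is the `n`-th harmonic number. -/
def Hs : ℕ → List ℤ → ℚ
  | _, [] => 1
  | n, k :: ks => ∑ m ∈ Finset.Icc 1 n, ((m : ℚ) ^ k)⁻¹ * Hs (m - 1) ks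

lemma Hs_nil (n : ℕ) : Hs n [] = 1 := rfl

lemma Hs_cons (n : ℕ) (k : ℤ) (ks : List ℤ) :
    Hs n (k :: ks) = ∑ m ∈ Finset.Icc 1 n, ((m : ℚ) ^ k)⁻¹ * Hs (m - 1) ks := rfl

/-- Faulhaber coefficient. -/
def cB (e j : ℕ) : ℚ := ((e + 1).choose j : ℚ) * bernoulli' j / ((e + 1 : ℕ) : ℚ)

lemma Hs_succ (n : ℕ) (x : ℤ) (xs : List ℤ) :
    Hs (n+1) (x :: xs) = Hs n (x :: xs) + (((n+1 : ℕ) : ℚ) ^ x)⁻¹ * Hs n xs := by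
  rw [Hs_cons, Hs_cons, Finset.sum_Icc_succ_top (by omega : 1 ≤ n+1)]
  simp

lemma Hs_single_neg (n e : ℕ) :
    Hs n [-(e:ℤ)] = ∑ j ∈ Finset.range (e+1), cB e j * (n:ℚ)^(e+1-j) := by
  have h1 : Hs n [-(e:ℤ)] = ∑ m ∈ Finset.Icc 1 n, ((m:ℚ))^e := by
    rw [Hs_cons]
    refine Finset.sum_congr rfl fun m hm => ?_
    rw [Hs_nil, mul_one, zpow_neg, inv_inv, zpow_natCast]
  rw [h1, ← Finset.Ico_add_one_right_eq_Icc, sum_Ico_pow]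
  refine Finset.sum_congr rfl fun j _ => ?_
  simp only [cB]
  push_cast
  ring

lemma Hs_abel (a k : ℤ) (L : List ℤ) (n : ℕ) :
    Hs n (a :: k :: L) = Hs n [a] * Hs n (k :: L)
      - ∑ m ∈ Finset.Icc 1 n, Hs m [a] * ((m:ℚ)^k)⁻¹ * Hs (m-1) L := by
  induction n with
  | zero => simp [Hs_cons]
  | succ n ih =>
    have ha : Hs (n+1) [a] = Hs n [a] + (((n+1:ℕ):ℚ)^a)⁻¹ := by
      rw [Hs_succ]; simp [Hs_nil]
    rw [Hs_succ n a (k :: L), ih, Finset.sum_Icc_succ_top (by omega : 1 ≤ n+1),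
        Hs_succ n k L, ha]
    simp only [Nat.add_sub_cancel]
    ring

lemma Hs_step (e : ℕ) (k : ℤ) (L : List ℤ) (n : ℕ) :
    Hs n (-(e:ℤ) :: k :: L) = Hs n [-(e:ℤ)] * Hs n (k :: L)
      - ∑ j ∈ Finset.range (e+1), cB e j * Hs n ((k + j - e - 1) :: L) := by
  rw [Hs_abel]
  congr 1
  have hterm : ∀ m ∈ Finset.Icc 1 n, Hs m [-(e:ℤ)] * ((m:ℚ)^k)⁻¹ * Hs (m-1) L
      = ∑ j ∈ Finset.range (e+1), cB e j *
          (((m:ℚ)^(k + j - e - 1))⁻¹ * Hs (m-1) L) := by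
    intro m hm
    have hm0 : (m:ℚ) ≠ 0 := by
      have : (1:ℕ) ≤ m := (Finset.mem_Icc.mp hm).1
      exact Nat.cast_ne_zero.mpr (by omega)
    rw [Hs_single_neg m e, Finset.sum_mul, Finset.sum_mul]
    refine Finset.sum_congr rfl fun j hj => ?_
    have hpow : (m:ℚ)^(e+1-j) * ((m:ℚ)^k)⁻¹ = ((m:ℚ)^(k + j - e - 1))⁻¹ := by
      have hj' : j < e + 1 := Finset.mem_range.mp hj
      have hc : ((e+1-j : ℕ) : ℤ) = -(k+(j:ℤ)-e-1) + k := by omega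
      rw [← zpow_natCast (m:ℚ) (e+1-j), hc, zpow_add₀ hm0, zpow_neg,
        mul_assoc, mul_inv_cancel₀ (zpow_ne_zero _ hm0), mul_one]
    calc cB e j * (m:ℚ)^(e+1-j) * ((m:ℚ)^k)⁻¹ * Hs (m-1) L
        = cB e j * ((m:ℚ)^(e+1-j) * ((m:ℚ)^k)⁻¹ * Hs (m-1) L) := by ring
      _ = _ := by rw [hpow]
  rw [Finset.sum_congr rfl hterm, Finset.sum_comm]
  refine Finset.sum_congr rfl fun j _ => ?_
  rw [Hs_cons, Finset.mul_sum]

lemma Hs_good (k₂ e₁ n : ℕ) :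
    Hs n (-(e₁:ℤ) :: [(k₂:ℤ)]) =
      (∑ l ∈ Finset.range (e₁+1), cB e₁ l * (n:ℚ)^(e₁+1-l)) * Hs n [(k₂:ℤ)]
      - ∑ j₂ ∈ Finset.range (e₁+1), cB e₁ j₂ *
          (if e₁ + 2 ≤ k₂ + j₂ then Hs n [(k₂:ℤ) + j₂ - e₁ - 1]
           else ∑ j₃ ∈ Finset.range (e₁+2-k₂-j₂), cB (e₁+1-k₂-j₂) j₃ * (n:ℚ)^(e₁+2-k₂-j₂-j₃)) := by
  rw [Hs_step e₁ (k₂:ℤ) [] n, Hs_single_neg n e₁]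
  congr 1
  refine Finset.sum_congr rfl fun j₂ hj₂ => ?_
  congr 1
  by_cases hc : e₁ + 2 ≤ k₂ + j₂
  · rw [if_pos hc]
  · rw [if_neg hc]
    have hc2 : (k₂:ℤ) + j₂ - e₁ - 1 = -((e₁+1-k₂-j₂ : ℕ) : ℤ) := by omega
    rw [hc2, Hs_single_neg n (e₁+1-k₂-j₂)]
    have h1 : e₁+1-k₂-j₂+1 = e₁+2-k₂-j₂ := by omega
    simp only [h1]

lemma sum_range_shrink (M N : ℕ) (h : M ≤ N) (f : ℕ → ℚ) (h0 : ∀ j, M ≤ j → j < N → f j = 0) :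
    ∑ j ∈ Finset.range N, f j = ∑ j ∈ Finset.range M, f j := by
  symm
  apply Finset.sum_subset (Finset.range_subset_range.mpr h)
  intro x hx hnx
  exact h0 x (by simpa using hnx) (by simpa using hx)

lemma sum_range_ite (M N : ℕ) (h : M ≤ N) (g : ℕ → ℚ) :
    ∑ l ∈ Finset.range N, (if l < M then g l else 0) = ∑ l ∈ Finset.range M, g l := by
  rw [← Finset.sum_filter]
  congr 1
  ext x
  simp only [Finset.mem_filter, Finset.mem_range]
  omega

lemma hT2 (k₁ k₂ p n : ℕ) :
    ∑ j ∈ Finset.range (p+1), (if p + 2 ≤ j + k₁ then cB p j * Hs n [(k₁ : ℤ) + j - p - 1, (k₂ : ℤ)] else 0)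
    = (1 / (p + 1 : ℚ)) * ∑ j ∈ Finset.Icc (p + 2 - k₁) p, ((p + 1).choose j : ℚ) * bernoulli' j * Hs n [(k₁ : ℤ) + j - p - 1, (k₂ : ℤ)] := by
  rw [Finset.mul_sum]
  rw [show Finset.Icc (p + 2 - k₁) p = Finset.filter (fun j => p + 2 ≤ j + k₁) (Finset.range (p+1)) from by
    ext x; simp only [Finset.mem_Icc, Finset.mem_filter, Finset.mem_range]; omega]
  rw [Finset.sum_filter]
  refine Finset.sum_congr rfl fun j hj => ?_
  by_cases hc : p + 2 ≤ j + k₁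
  · rw [if_pos hc, if_pos hc]
    simp only [cB]
    push_cast
    ring
  · rw [if_neg hc, if_neg hc]

lemma hT5 (k₁ k₂ p n : ℕ) (hk₁ : 0 < k₁) :
    ∑ j ∈ Finset.range (p+1), (if j + k₁ ≤ p + 1 then cB p j * (∑ l ∈ Finset.range (p + 2 - k₁ - j), cB (p + 1 - k₁ - j) l * (n : ℚ) ^ (p + 2 - k₁ - j - l)) * Hs n [(k₂ : ℤ)] else 0)
    = (1 / (p + 1 : ℚ)) * ∑ j ∈ Finset.range (p + 2), ∑ l ∈ Finset.range (p + 2),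
        (if j + k₁ ≤ p + 1 ∧ l + k₁ + j ≤ p + 1 then ((p + 1).choose j : ℚ) * ((p + 2 - k₁ - j).choose l : ℚ) / ((p + 2 - k₁ - j : ℕ) : ℚ) * (n : ℚ) ^ (p + 2 - k₁ - j - l) * (bernoulli' j * bernoulli' l) * Hs n [(k₂ : ℤ)] else 0) := by
  rw [Finset.mul_sum]
  rw [← sum_range_shrink (p+1) (p+2) (by omega)
    (fun j => if j + k₁ ≤ p + 1 then cB p j * (∑ l ∈ Finset.range (p + 2 - k₁ - j), cB (p + 1 - k₁ - j) l * (n : ℚ) ^ (p + 2 - k₁ - j - l)) * Hs n [(k₂ : ℤ)] else 0)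
    (fun j h1 h2 => if_neg (by omega))]
  refine Finset.sum_congr rfl fun j hj => ?_
  conv_rhs => rw [Finset.mul_sum]
  by_cases hg : j + k₁ ≤ p + 1
  · rw [if_pos hg, Finset.mul_sum, Finset.sum_mul]
    have hcond : ∀ l : ℕ, (1 / (p + 1 : ℚ)) * (if j + k₁ ≤ p + 1 ∧ l + k₁ + j ≤ p + 1 then ((p + 1).choose j : ℚ) * ((p + 2 - k₁ - j).choose l : ℚ) / ((p + 2 - k₁ - j : ℕ) : ℚ) * (n : ℚ) ^ (p + 2 - k₁ - j - l) * (bernoulli' j * bernoulli' l) * Hs n [(k₂ : ℤ)] else 0)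
        = (if l < p + 2 - k₁ - j then (1 / (p + 1 : ℚ)) * (((p + 1).choose j : ℚ) * ((p + 2 - k₁ - j).choose l : ℚ) / ((p + 2 - k₁ - j : ℕ) : ℚ) * (n : ℚ) ^ (p + 2 - k₁ - j - l) * (bernoulli' j * bernoulli' l) * Hs n [(k₂ : ℤ)]) else 0) := by
      intro l
      by_cases hl : l + k₁ + j ≤ p + 1
      · rw [if_pos ⟨hg, hl⟩, if_pos (by omega)]
      · rw [if_neg (fun hc => hl hc.2), if_neg (by omega), mul_zero]
    simp only [hcond]
    rw [sum_range_ite (p + 2 - k₁ - j) (p+2) (by omega)]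
    refine Finset.sum_congr rfl fun l hl => ?_
    simp only [cB, show p + 1 - k₁ - j + 1 = p + 2 - k₁ - j from by omega]
    push_cast
    ring
  · rw [if_neg hg]
    symm
    refine Finset.sum_eq_zero fun l _ => ?_
    rw [if_neg (fun hc => hg hc.1), mul_zero]

lemma hT3 (k₁ k₂ p n : ℕ) (hk₁ : 0 < k₁) :
    ∑ j ∈ Finset.range (p+1), (if j + k₁ ≤ p + 1 then cB p j * (∑ j₂ ∈ Finset.range (p + 2 - k₁ - j), if p + 3 ≤ k₁ + k₂ + j + j₂ then cB (p + 1 - k₁ - j) j₂ * Hs n [(k₁ : ℤ) + k₂ + j + j₂ - p - 2] else 0) else 0)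
    = (1 / (p + 1 : ℚ)) * ∑ j ∈ Finset.range (p + 2), ∑ j₂ ∈ Finset.range (p + 2),
        (if j + k₁ ≤ p + 1 ∧ p + 3 ≤ k₁ + k₂ + j + j₂ ∧ j₂ + k₁ + j ≤ p + 1 then ((p + 1).choose j : ℚ) * ((p + 2 - k₁ - j).choose j₂ : ℚ) / ((p + 2 - k₁ - j : ℕ) : ℚ) * (bernoulli' j * bernoulli' j₂) * Hs n [(k₁ : ℤ) + k₂ + j + j₂ - p - 2] else 0) := by
  rw [Finset.mul_sum]
  rw [← sum_range_shrink (p+1) (p+2) (by omega)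
    (fun j => if j + k₁ ≤ p + 1 then cB p j * (∑ j₂ ∈ Finset.range (p + 2 - k₁ - j), if p + 3 ≤ k₁ + k₂ + j + j₂ then cB (p + 1 - k₁ - j) j₂ * Hs n [(k₁ : ℤ) + k₂ + j + j₂ - p - 2] else 0) else 0)
    (fun j h1 h2 => if_neg (by omega))]
  refine Finset.sum_congr rfl fun j hj => ?_
  conv_rhs => rw [Finset.mul_sum]
  by_cases hg : j + k₁ ≤ p + 1
  · rw [if_pos hg, Finset.mul_sum]
    have hcond : ∀ j₂ : ℕ, (1 / (p + 1 : ℚ)) * (if j + k₁ ≤ p + 1 ∧ p + 3 ≤ k₁ + k₂ + j + j₂ ∧ j₂ + k₁ + j ≤ p + 1 then ((p + 1).choose j : ℚ) * ((p + 2 - k₁ - j).choose j₂ : ℚ) / ((p + 2 - k₁ - j : ℕ) : ℚ) * (bernoulli' j * bernoulli' j₂) * Hs n [(k₁ : ℤ) + k₂ + j + j₂ - p - 2] else 0)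
        = (if j₂ < p + 2 - k₁ - j then
            (if p + 3 ≤ k₁ + k₂ + j + j₂ then (1 / (p + 1 : ℚ)) * (((p + 1).choose j : ℚ) * ((p + 2 - k₁ - j).choose j₂ : ℚ) / ((p + 2 - k₁ - j : ℕ) : ℚ) * (bernoulli' j * bernoulli' j₂) * Hs n [(k₁ : ℤ) + k₂ + j + j₂ - p - 2]) else 0) else 0) := by
      intro j₂
      by_cases hl : j₂ + k₁ + j ≤ p + 1
      · by_cases hpos : p + 3 ≤ k₁ + k₂ + j + j₂
        · rw [if_pos ⟨hg, hpos, hl⟩, if_pos (by omega), if_pos hpos]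
        · rw [if_neg (fun hc => hpos hc.2.1), if_pos (by omega), if_neg hpos, mul_zero]
      · rw [if_neg (fun hc => hl hc.2.2), if_neg (by omega), mul_zero]
    simp only [hcond]
    rw [sum_range_ite (p + 2 - k₁ - j) (p+2) (by omega)]
    refine Finset.sum_congr rfl fun j₂ hl => ?_
    by_cases hpos : p + 3 ≤ k₁ + k₂ + j + j₂
    · rw [if_pos hpos, if_pos hpos]
      simp only [cB, show p + 1 - k₁ - j + 1 = p + 2 - k₁ - j from by omega]
      push_cast
      ring
    · rw [if_neg hpos, if_neg hpos, mul_zero]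
  · rw [if_neg hg]
    symm
    refine Finset.sum_eq_zero fun j₂ _ => ?_
    rw [if_neg (fun hc => hg hc.1), mul_zero]

lemma hT4 (k₁ k₂ p n : ℕ) (hk₁ : 0 < k₁) (hk₂ : 0 < k₂) :
    ∑ j ∈ Finset.range (p+1), (if j + k₁ ≤ p + 1 then cB p j * (∑ j₂ ∈ Finset.range (p + 2 - k₁ - j), if ¬ (p + 3 ≤ k₁ + k₂ + j + j₂) then cB (p + 1 - k₁ - j) j₂ * (∑ j₃ ∈ Finset.range (p + 3 - k₁ - k₂ - j - j₂), cB (p + 2 - k₁ - k₂ - j - j₂) j₃ * (n : ℚ) ^ (p + 3 - k₁ - k₂ - j - j₂ - j₃)) else 0) else 0)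
    = (1 / (p + 1 : ℚ)) * ∑ j ∈ Finset.range (p + 3), ∑ j₂ ∈ Finset.range (p + 3),
        ∑ j₃ ∈ Finset.range (p + 3),
        (if j + k₁ ≤ p + 1 ∧ j₂ + k₁ + k₂ + j ≤ p + 2 ∧ j₃ + k₁ + k₂ + j + j₂ ≤ p + 2 then ((p + 1).choose j : ℚ) * ((p + 2 - k₁ - j).choose j₂ : ℚ) * ((p + 3 - k₁ - k₂ - j - j₂).choose j₃ : ℚ) / (((p + 2 - k₁ - j : ℕ) : ℚ) * ((p + 3 - k₁ - k₂ - j - j₂ : ℕ) : ℚ)) * (bernoulli' j * bernoulli' j₂ * bernoulli' j₃) * (n : ℚ) ^ (p + 3 - k₁ - k₂ - j - j₂ - j₃) else 0) := by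
  rw [Finset.mul_sum]
  rw [← sum_range_shrink (p+1) (p+3) (by omega)
    (fun j => if j + k₁ ≤ p + 1 then cB p j * (∑ j₂ ∈ Finset.range (p + 2 - k₁ - j), if ¬ (p + 3 ≤ k₁ + k₂ + j + j₂) then cB (p + 1 - k₁ - j) j₂ * (∑ j₃ ∈ Finset.range (p + 3 - k₁ - k₂ - j - j₂), cB (p + 2 - k₁ - k₂ - j - j₂) j₃ * (n : ℚ) ^ (p + 3 - k₁ - k₂ - j - j₂ - j₃)) else 0) else 0)
    (fun j h1 h2 => if_neg (by omega))]
  refine Finset.sum_congr rfl fun j hj => ?_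
  conv_rhs => rw [Finset.mul_sum]
  by_cases hg : j + k₁ ≤ p + 1
  · rw [if_pos hg, Finset.mul_sum]
    have hcond : ∀ j₂ : ℕ, (1 / (p + 1 : ℚ)) * ∑ j₃ ∈ Finset.range (p + 3),
          (if j + k₁ ≤ p + 1 ∧ j₂ + k₁ + k₂ + j ≤ p + 2 ∧ j₃ + k₁ + k₂ + j + j₂ ≤ p + 2 then ((p + 1).choose j : ℚ) * ((p + 2 - k₁ - j).choose j₂ : ℚ) * ((p + 3 - k₁ - k₂ - j - j₂).choose j₃ : ℚ) / (((p + 2 - k₁ - j : ℕ) : ℚ) * ((p + 3 - k₁ - k₂ - j - j₂ : ℕ) : ℚ)) * (bernoulli' j * bernoulli' j₂ * bernoulli' j₃) * (n : ℚ) ^ (p + 3 - k₁ - k₂ - j - j₂ - j₃) else 0)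
        = (if j₂ < p + 2 - k₁ - j then
            (if ¬ (p + 3 ≤ k₁ + k₂ + j + j₂) then
              ∑ j₃ ∈ Finset.range (p + 3 - k₁ - k₂ - j - j₂),
                (1 / (p + 1 : ℚ)) * (((p + 1).choose j : ℚ) * ((p + 2 - k₁ - j).choose j₂ : ℚ) * ((p + 3 - k₁ - k₂ - j - j₂).choose j₃ : ℚ) / (((p + 2 - k₁ - j : ℕ) : ℚ) * ((p + 3 - k₁ - k₂ - j - j₂ : ℕ) : ℚ)) * (bernoulli' j * bernoulli' j₂ * bernoulli' j₃) * (n : ℚ) ^ (p + 3 - k₁ - k₂ - j - j₂ - j₃)) else 0) else 0) := by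
      intro j₂
      by_cases h2 : j₂ + k₁ + k₂ + j ≤ p + 2
      · rw [if_pos (by omega), if_pos (by omega), Finset.mul_sum]
        have hcond3 : ∀ j₃ : ℕ, (1 / (p + 1 : ℚ)) * (if j + k₁ ≤ p + 1 ∧ j₂ + k₁ + k₂ + j ≤ p + 2 ∧ j₃ + k₁ + k₂ + j + j₂ ≤ p + 2 then ((p + 1).choose j : ℚ) * ((p + 2 - k₁ - j).choose j₂ : ℚ) * ((p + 3 - k₁ - k₂ - j - j₂).choose j₃ : ℚ) / (((p + 2 - k₁ - j : ℕ) : ℚ) * ((p + 3 - k₁ - k₂ - j - j₂ : ℕ) : ℚ)) * (bernoulli' j * bernoulli' j₂ * bernoulli' j₃) * (n : ℚ) ^ (p + 3 - k₁ - k₂ - j - j₂ - j₃) else 0)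
            = (if j₃ < p + 3 - k₁ - k₂ - j - j₂ then (1 / (p + 1 : ℚ)) * (((p + 1).choose j : ℚ) * ((p + 2 - k₁ - j).choose j₂ : ℚ) * ((p + 3 - k₁ - k₂ - j - j₂).choose j₃ : ℚ) / (((p + 2 - k₁ - j : ℕ) : ℚ) * ((p + 3 - k₁ - k₂ - j - j₂ : ℕ) : ℚ)) * (bernoulli' j * bernoulli' j₂ * bernoulli' j₃) * (n : ℚ) ^ (p + 3 - k₁ - k₂ - j - j₂ - j₃)) else 0) := by
          intro j₃
          by_cases h3 : j₃ + k₁ + k₂ + j + j₂ ≤ p + 2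
          · rw [if_pos ⟨hg, h2, h3⟩, if_pos (by omega)]
          · rw [if_neg (fun hc => h3 hc.2.2), if_neg (by omega), mul_zero]
        simp only [hcond3]
        rw [sum_range_ite (p + 3 - k₁ - k₂ - j - j₂) (p+3) (by omega)]
      · have hz : ∀ j₃ ∈ Finset.range (p + 3),
            (if j + k₁ ≤ p + 1 ∧ j₂ + k₁ + k₂ + j ≤ p + 2 ∧ j₃ + k₁ + k₂ + j + j₂ ≤ p + 2 then ((p + 1).choose j : ℚ) * ((p + 2 - k₁ - j).choose j₂ : ℚ) * ((p + 3 - k₁ - k₂ - j - j₂).choose j₃ : ℚ) / (((p + 2 - k₁ - j : ℕ) : ℚ) * ((p + 3 - k₁ - k₂ - j - j₂ : ℕ) : ℚ)) * (bernoulli' j * bernoulli' j₂ * bernoulli' j₃) * (n : ℚ) ^ (p + 3 - k₁ - k₂ - j - j₂ - j₃) else 0) = 0 :=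
          fun j₃ _ => if_neg (fun hc => h2 hc.2.1)
        rw [Finset.sum_eq_zero hz, mul_zero]
        by_cases hm : j₂ < p + 2 - k₁ - j
        · rw [if_pos hm, if_neg (by omega)]
        · rw [if_neg hm]
    simp only [hcond]
    rw [sum_range_ite (p + 2 - k₁ - j) (p+3) (by omega)]
    refine Finset.sum_congr rfl fun j₂ hl => ?_
    by_cases hpos : p + 3 ≤ k₁ + k₂ + j + j₂
    · rw [if_neg (by omega), if_neg (by omega), mul_zero]
    · rw [if_pos hpos, if_pos hpos]
      simp only [Finset.mul_sum]
      refine Finset.sum_congr rfl fun j₃ h3 => ?_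
      simp only [cB, show p + 1 - k₁ - j + 1 = p + 2 - k₁ - j from by omega,
        show p + 2 - k₁ - k₂ - j - j₂ + 1 = p + 3 - k₁ - k₂ - j - j₂ from by omega]
      push_cast
      ring
  · rw [if_neg hg]
    symm
    refine Finset.sum_eq_zero fun j₂ _ => ?_
    rw [Finset.sum_eq_zero (fun j₃ _ => if_neg (fun hc => hg hc.1)), mul_zero]

/-- Corollary 2.4.  The explicit formula for `H_n(−p, k₁, k₂)`.
Sums with an upper limit below the lower limit are empty, negative lower limits are truncated
at `0`; the bounds are encoded additively in `ℕ` by the `if`-guards (and by the truncated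
`Finset.Icc` in the first sum). -/
theorem stmt_5 (k₁ k₂ : ℕ) (hk₁ : 0 < k₁) (hk₂ : 0 < k₂) (p : ℕ) (n : ℕ) (hn : 0 < n) :
    Hs n [-(p : ℤ), (k₁ : ℤ), (k₂ : ℤ)] =
      Hs n [-(p : ℤ)] * Hs n [(k₁ : ℤ), (k₂ : ℤ)]
      - (1 / (p + 1 : ℚ)) * ∑ j ∈ Finset.Icc (p + 2 - k₁) p,
          ((p + 1).choose j : ℚ) * bernoulli' j * Hs n [(k₁ : ℤ) + j - p - 1, (k₂ : ℤ)]
      + (1 / (p + 1 : ℚ)) * ∑ j₁ ∈ Finset.range (p + 2), ∑ j₂ ∈ Finset.range (p + 2),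
          (if j₁ + k₁ ≤ p + 1 ∧ p + 3 ≤ k₁ + k₂ + j₁ + j₂ ∧ j₂ + k₁ + j₁ ≤ p + 1 then
            ((p + 1).choose j₁ : ℚ) * ((p + 2 - k₁ - j₁).choose j₂ : ℚ) /
                ((p + 2 - k₁ - j₁ : ℕ) : ℚ) *
              (bernoulli' j₁ * bernoulli' j₂) * Hs n [(k₁ : ℤ) + k₂ + j₁ + j₂ - p - 2]
          else 0)
      + (1 / (p + 1 : ℚ)) * ∑ j₁ ∈ Finset.range (p + 3), ∑ j₂ ∈ Finset.range (p + 3),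
          ∑ j₃ ∈ Finset.range (p + 3),
          (if j₁ + k₁ ≤ p + 1 ∧ j₂ + k₁ + k₂ + j₁ ≤ p + 2 ∧ j₃ + k₁ + k₂ + j₁ + j₂ ≤ p + 2 then
            ((p + 1).choose j₁ : ℚ) * ((p + 2 - k₁ - j₁).choose j₂ : ℚ) *
                ((p + 3 - k₁ - k₂ - j₁ - j₂).choose j₃ : ℚ) /
                (((p + 2 - k₁ - j₁ : ℕ) : ℚ) * ((p + 3 - k₁ - k₂ - j₁ - j₂ : ℕ) : ℚ)) *
              (bernoulli' j₁ * bernoulli' j₂ * bernoulli' j₃) *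
              (n : ℚ) ^ (p + 3 - k₁ - k₂ - j₁ - j₂ - j₃)
          else 0)
      - (1 / (p + 1 : ℚ)) * ∑ j ∈ Finset.range (p + 2), ∑ l ∈ Finset.range (p + 2),
          (if j + k₁ ≤ p + 1 ∧ l + k₁ + j ≤ p + 1 then
            ((p + 1).choose j : ℚ) * ((p + 2 - k₁ - j).choose l : ℚ) /
                ((p + 2 - k₁ - j : ℕ) : ℚ) *
              (n : ℚ) ^ (p + 2 - k₁ - j - l) * (bernoulli' j * bernoulli' l) * Hs n [(k₂ : ℤ)]
          else 0) := by
  rw [Hs_step p (k₁ : ℤ) [(k₂ : ℤ)] n]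
  have hj : ∀ j ∈ Finset.range (p+1),
      cB p j * Hs n (((k₁ : ℤ) + j - p - 1) :: [(k₂ : ℤ)])
      = (if p + 2 ≤ j + k₁ then cB p j * Hs n [(k₁ : ℤ) + j - p - 1, (k₂ : ℤ)] else 0)
        + (if j + k₁ ≤ p + 1 then cB p j * (∑ l ∈ Finset.range (p + 2 - k₁ - j), cB (p + 1 - k₁ - j) l * (n : ℚ) ^ (p + 2 - k₁ - j - l)) * Hs n [(k₂ : ℤ)] else 0)
        - (if j + k₁ ≤ p + 1 then cB p j * (∑ j₂ ∈ Finset.range (p + 2 - k₁ - j), if p + 3 ≤ k₁ + k₂ + j + j₂ then cB (p + 1 - k₁ - j) j₂ * Hs n [(k₁ : ℤ) + k₂ + j + j₂ - p - 2] else 0) else 0)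
        - (if j + k₁ ≤ p + 1 then cB p j * (∑ j₂ ∈ Finset.range (p + 2 - k₁ - j), if ¬ (p + 3 ≤ k₁ + k₂ + j + j₂) then cB (p + 1 - k₁ - j) j₂ * (∑ j₃ ∈ Finset.range (p + 3 - k₁ - k₂ - j - j₂), cB (p + 2 - k₁ - k₂ - j - j₂) j₃ * (n : ℚ) ^ (p + 3 - k₁ - k₂ - j - j₂ - j₃)) else 0) else 0) := by
    intro j hjr
    have hjp : j < p + 1 := Finset.mem_range.mp hjr
    by_cases hg : j + k₁ ≤ p + 1
    · rw [if_neg (by omega), if_pos hg, if_pos hg, if_pos hg, zero_add]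
      have hc : (k₁ : ℤ) + j - p - 1 = -((p + 1 - k₁ - j : ℕ) : ℤ) := by omega
      rw [hc, Hs_good k₂ (p + 1 - k₁ - j) n]
      have e1 : p + 1 - k₁ - j + 1 = p + 2 - k₁ - j := by omega
      have e2 : ∀ j₂ : ℕ, (p + 1 - k₁ - j + 2 ≤ k₂ + j₂) = (p + 3 ≤ k₁ + k₂ + j + j₂) :=
        fun j₂ => propext (by omega)
      have e3 : ∀ j₂ : ℕ, (k₂ : ℤ) + j₂ - ((p + 1 - k₁ - j : ℕ) : ℤ) - 1
          = (k₁ : ℤ) + k₂ + j + j₂ - p - 2 := fun j₂ => by omega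
      have e4 : ∀ j₂ : ℕ, p + 1 - k₁ - j + 2 - k₂ - j₂ = p + 3 - k₁ - k₂ - j - j₂ :=
        fun j₂ => by omega
      have e5 : ∀ j₂ : ℕ, p + 2 - k₁ - j - k₂ - j₂ = p + 2 - k₁ - k₂ - j - j₂ :=
        fun j₂ => by omega
      simp only [e1, e2, e3, e4, e5]
      rw [mul_sub]
      have hsplit : ∑ j₂ ∈ Finset.range (p + 2 - k₁ - j), cB (p + 1 - k₁ - j) j₂ *
            (if p + 3 ≤ k₁ + k₂ + j + j₂ then Hs n [(k₁ : ℤ) + k₂ + j + j₂ - p - 2]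
             else ∑ j₃ ∈ Finset.range (p + 3 - k₁ - k₂ - j - j₂), cB (p + 2 - k₁ - k₂ - j - j₂) j₃ * (n : ℚ) ^ (p + 3 - k₁ - k₂ - j - j₂ - j₃))
          = (∑ j₂ ∈ Finset.range (p + 2 - k₁ - j),
              if p + 3 ≤ k₁ + k₂ + j + j₂ then cB (p + 1 - k₁ - j) j₂ * Hs n [(k₁ : ℤ) + k₂ + j + j₂ - p - 2] else 0)
            + (∑ j₂ ∈ Finset.range (p + 2 - k₁ - j),
              if ¬ (p + 3 ≤ k₁ + k₂ + j + j₂) then cB (p + 1 - k₁ - j) j₂ * (∑ j₃ ∈ Finset.range (p + 3 - k₁ - k₂ - j - j₂), cB (p + 2 - k₁ - k₂ - j - j₂) j₃ * (n : ℚ) ^ (p + 3 - k₁ - k₂ - j - j₂ - j₃)) else 0) := by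
        rw [← Finset.sum_add_distrib]
        refine Finset.sum_congr rfl fun j₂ _ => ?_
        by_cases hc2 : p + 3 ≤ k₁ + k₂ + j + j₂ <;> simp [hc2]
      rw [hsplit, mul_add]
      ring
    · rw [if_pos (by omega), if_neg hg, if_neg hg, if_neg hg]
      ring
  rw [Finset.sum_congr rfl hj, Finset.sum_sub_distrib, Finset.sum_sub_distrib,
    Finset.sum_add_distrib, hT2 k₁ k₂ p n, hT5 k₁ k₂ p n hk₁, hT3 k₁ k₂ p n hk₁,
    hT4 k₁ k₂ p n hk₁ hk₂]
  ring
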